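/- (Out-degrees in the chase) Let Q be a set of s-pider queries and consider Chase(T_Q, green full s-pider). Every knee has out-degree 1. Every head of a red s-pider has out-degree exactly 1 with respect to each red relation T_i and each red T^i, and out-degree 0 with respect to every other binary relation; symmetrically for green heads with colors reversed. -/

import Mathlib

/-!  A general framework for relational structures, conjunctive queries,
tuple generating dependencies (TGDs), and the chase, following
Gogacz–Marcinkowski, "The Hunt for a Red Spider: Conjunctive Query
Determinacy Is Undecidable". -/

namespace CQD

/-- A relational structure over relation symbols `R` and domain `D`:
a set of atoms, each a relation symbol together with its tuple of arguments. -/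
abbrev Struc (R D : Type*) := Set (R × List D)

/-- Map a structure along a function on domain elements. -/
def smap {R D E : Type*} (h : D → E) (S : Struc R D) : Struc R E :=
  (fun a => (a.1, a.2.map h)) '' S

/-- Terms over constants `K`: variables (natural numbers) or constants. -/
abbrev Term (K : Type*) := ℕ ⊕ K

/-- A conjunction of atoms over variables and constants from `K`. -/
abbrev Conj (R K : Type*) := Struc R (Term K)

/-- `h` is a homomorphism from the conjunction `Φ` into the structure `S`,
where the constants are interpreted by `ι`. -/
def IsHom {R K D : Type*} (Φ : Conj R K) (S : Struc R D) (ι : K → D) (h : ℕ → D) : Prop :=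
  ∀ a ∈ Φ, (a.1, a.2.map (Sum.elim h ι)) ∈ S

/-- A tuple-generating dependency `∀ x̄ ȳ (body(x̄,ȳ) → ∃ z̄ head(z̄,ȳ))`;
`frontier` is the set of universally quantified variables `ȳ` shared by body and head. -/
structure TGD (R K : Type*) where
  body : Conj R K
  head : Conj R K
  frontier : Set ℕ

/-- `Φ` holds in `S` at the tuple `b` (given on the frontier variables `fr`). -/
def holdsAt {R K D : Type*} (Φ : Conj R K) (fr : Set ℕ) (S : Struc R D) (ι : K → D)
    (b : ℕ → D) : Prop :=
  ∃ h : ℕ → D, IsHom Φ S ι h ∧ ∀ y ∈ fr, h y = b y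

/-- A structure satisfies a TGD in the usual first-order sense. -/
def TGD.sat {R K D : Type*} (T : TGD R K) (S : Struc R D) (ι : K → D) : Prop :=
  ∀ b, holdsAt T.body T.frontier S ι b → holdsAt T.head T.frontier S ι b

/-- The `ToDo` set: pairs `⟨b̄, T⟩` whose body is satisfied at `b̄` but which still
lack a witness for the head. -/
def ToDo {R K D : Type*} (𝒯 : Set (TGD R K)) (S : Struc R D) (ι : K → D) :
    Set ((ℕ → D) × TGD R K) :=
  {p | p.2 ∈ 𝒯 ∧ holdsAt p.2.body p.2.frontier S ι p.1 ∧
       ¬ holdsAt p.2.head p.2.frontier S ι p.1}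

/-- The active domain of a structure. -/
def adom {R D : Type*} (S : Struc R D) : Set D := {d | ∃ a ∈ S, d ∈ a.2}

/-- `S'` is the result of one application `T(S, b̄)` of the TGD `T` to `S` at tuple `b̄`:
a fresh copy of the head is added, its frontier variables identified with `b̄`. -/
def IsStep {R K D : Type*} (T : TGD R K) (S : Struc R D) (ι : K → D) (b : ℕ → D)
    (S' : Struc R D) : Prop :=
  ∃ g : ℕ → D,
    (∀ y ∈ T.frontier, g y = b y) ∧
    (∀ x ∉ T.frontier, g x ∉ adom S ∧ g x ∉ Set.range ι) ∧
    Set.InjOn g {x | x ∉ T.frontier} ∧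
    S' = S ∪ smap (Sum.elim g ι) T.head

/-- Union of the stages strictly below `i`. -/
def partUnion {X : Type*} (seq : Ordinal.{0} → Set X) (i : Ordinal.{0}) : Set X :=
  ⋃ j ∈ Set.Iio i, seq j

/-- A fair chase sequence for the set `𝒯` of TGDs starting from `D0`. -/
structure ChaseSeq {R K D : Type*} (𝒯 : Set (TGD R K)) (D0 : Struc R D) (ι : K → D) where
  len : Ordinal.{0}
  pos : 0 < len
  seq : Ordinal.{0} → Struc R D
  init : seq 0 = D0
  step : ∀ i, 0 < i → i < len →
    ∃ p ∈ ToDo 𝒯 (partUnion seq i) ι, IsStep p.2 (partUnion seq i) ι p.1 (seq i)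
  fair : ∀ i < len, ∀ p ∈ ToDo 𝒯 (partUnion seq i) ι,
    ∃ k, i < k ∧ k ≤ len ∧ p ∉ ToDo 𝒯 (partUnion seq k) ι

/-- The result of a chase sequence: the union of all its stages. -/
def ChaseSeq.result {R K D : Type*} {𝒯 : Set (TGD R K)} {D0 : Struc R D} {ι : K → D}
    (C : ChaseSeq 𝒯 D0 ι) : Struc R D := partUnion C.seq C.len

/-- `S` is (the result of) a chase of `𝒯` over `D0`. -/
def IsChase {R K D : Type*} (𝒯 : Set (TGD R K)) (D0 : Struc R D) (ι : K → D)
    (S : Struc R D) : Prop :=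
  ∃ C : ChaseSeq 𝒯 D0 ι, C.result = S

/-- A conjunctive query: a conjunction of atoms with designated free variables. -/
structure CQ (R K : Type*) where
  body : Conj R K
  free : Set ℕ

/-- Colored (green/red) relation symbols: `true` = green, `false` = red. -/
abbrev CRel (R : Type*) := R × Bool

/-- Paint all atoms of a conjunction with the color `c`. -/
def paint {R K : Type*} (c : Bool) (Φ : Conj R K) : Conj (CRel R) K :=
  (fun a => ((a.1, c), a.2)) '' Φ

/-- The view `Q(S)` defined by a query with body `Φ` and free variables `fr`
over the structure `S`: the set of satisfying assignments of the free variables. -/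
def eval {R K D : Type*} (Φ : Conj R K) (fr : Set ℕ) (S : Struc R D) (ι : K → D) :
    Set (ℕ → D) :=
  {b | holdsAt Φ fr S ι b}

/-- The green-red TGD generated by `Q`, from color `c` to the opposite color
(`tgdGR true Q` is `Q^{G→R}`, `tgdGR false Q` is `Q^{R→G}`). -/
def tgdGR {R K : Type*} (c : Bool) (Q : CQ R K) : TGD (CRel R) K :=
  ⟨paint c Q.body, paint (!c) Q.body, Q.free⟩

/-- The set `𝒯_𝒬` of green-red TGDs generated by a set of conjunctive queries. -/
def TQ {R K : Type*} (𝒬 : Set (CQ R K)) : Set (TGD (CRel R) K) :=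
  {T | ∃ Q ∈ 𝒬, ∃ c : Bool, T = tgdGR c Q}

end CQD

/-! The s-pider signature, ideal s-piders, s-pider queries and the s-pider chase. -/

namespace Spider

open CQD

/-- Relation symbols of the s-pider signature: a ternary `H`, thighs `T_i, T^i`
and calves `C_i, C^i` (all binary). -/
inductive SpRel (s : ℕ) : Type
  | H : SpRel s
  | Tlo : Fin s → SpRel s
  | Tup : Fin s → SpRel s
  | Clo : Fin s → SpRel s
  | Cup : Fin s → SpRel s

/-- Constants `c_i` (left) and `c^i` (right). -/
abbrev SpK (s : ℕ) := Fin s ⊕ Fin s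

abbrev SpTerm (s : ℕ) := CQD.Term (SpK s)

/-- The head variable `z`. -/
def vz (s : ℕ) : SpTerm s := Sum.inl 0
/-- The tail variable `z₁`. -/
def vtail (s : ℕ) : SpTerm s := Sum.inl 1
/-- The antenna variable `z₂`. -/
def vant (s : ℕ) : SpTerm s := Sum.inl 2
/-- The lower knee variable `x_i`. -/
def vx (s : ℕ) (i : Fin s) : SpTerm s := Sum.inl (2 * (i : ℕ) + 3)
/-- The upper knee variable `y_i`. -/
def vy (s : ℕ) (i : Fin s) : SpTerm s := Sum.inl (2 * (i : ℕ) + 4)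
/-- The constant `c_i`. -/
def clo (s : ℕ) (i : Fin s) : SpTerm s := Sum.inr (Sum.inl i)
/-- The constant `c^i`. -/
def cup (s : ℕ) (i : Fin s) : SpTerm s := Sum.inr (Sum.inr i)

/-- The conjunction `Φ_s`:
`H(z,z₁,z₂) ∧ ⋀ᵢ T_i(z,x_i) ∧ T^i(z,y_i) ∧ C_i(x_i,c_i) ∧ C^i(y_i,c^i)`. -/
def Phi (s : ℕ) : Conj (SpRel s) (SpK s) :=
  {(SpRel.H, [vz s, vtail s, vant s])} ∪
  ⋃ i : Fin s,
    ({(SpRel.Tlo i, [vz s, vx s i]), (SpRel.Tup i, [vz s, vy s i]),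
      (SpRel.Clo i, [vx s i, clo s i]), (SpRel.Cup i, [vy s i, cup s i])} :
      Set (SpRel s × List (SpTerm s)))

/-- The ideal s-pider of color `c` with (empty-or-singleton) upper lame index `I`
and lower lame index `J`: the `c`-colored `Φ_s` with the calf atoms indexed by `I`
and `J` recolored to the opposite color. -/
def idealSp (s : ℕ) (c : Bool) (I J : Option (Fin s)) :
    Struc (CRel (SpRel s)) (SpTerm s) :=
  {((SpRel.H, c), [vz s, vtail s, vant s])} ∪
  ⋃ i : Fin s,
    ({((SpRel.Tlo i, c), [vz s, vx s i]), ((SpRel.Tup i, c), [vz s, vy s i]),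
      ((SpRel.Clo i, if J = some i then !c else c), [vx s i, clo s i]),
      ((SpRel.Cup i, if I = some i then !c else c), [vy s i, cup s i])} :
      Set (CRel (SpRel s) × List (SpTerm s)))

/-- The s-pider query `f^I_J`: the conjunction `Φ_s` with the calves indexed by
`I` (upper) and `J` (lower) removed; its free variables are the corresponding knees. -/
def spq (s : ℕ) (I J : Option (Fin s)) : CQ (SpRel s) (SpK s) where
  body := Phi s \
    ({a | ∃ i ∈ I, a = (SpRel.Cup i, [vy s i, cup s i])} ∪
     {a | ∃ j ∈ J, a = (SpRel.Clo j, [vx s j, clo s j])})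
  free := {n | (∃ i ∈ I, n = 2 * (i : ℕ) + 4) ∨ (∃ j ∈ J, n = 2 * (j : ℕ) + 3)}

/-- The set `𝔽_s` of s-pider queries (1-lame and 2-lame). -/
def SpiderQs (s : ℕ) : Set (CQ (SpRel s) (SpK s)) :=
  {q | ∃ I J : Option (Fin s), (I.isSome ∨ J.isSome) ∧ q = spq s I J}

/-- The interpretation of the constants in the canonical domain. -/
def spι (s : ℕ) : SpK s → SpTerm s := Sum.inr

/-- `S` is (the result of) a chase of the green-red TGDs generated by `𝒬`,
starting from the ideal green full s-pider. -/
def SpChase (s : ℕ) (𝒬 : Set (CQ (SpRel s) (SpK s)))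
    (S : Struc (CRel (SpRel s)) (SpTerm s)) : Prop :=
  IsChase (TQ 𝒬) (idealSp s true none none) (spι s) S

/-- `x ⊆ y` for empty-or-singleton sets coded as `Option`. -/
def osub {s : ℕ} (x y : Option (Fin s)) : Prop := ∀ i : Fin s, x = some i → y = some i

/-- `y ∖ x` for empty-or-singleton sets coded as `Option` (assuming `x ⊆ y`). -/
def odiff {s : ℕ} (y x : Option (Fin s)) : Option (Fin s) :=
  match x with | none => y | some _ => none

/-- A copy of the canonical structure `T0` occurs inside `S` (an injective
renaming of vertices which fixes the constants). -/
def CopyIn {s : ℕ} {V : Type*} (T0 : Struc (CRel (SpRel s)) (SpTerm s))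
    (ι : SpK s → V) (S : Struc (CRel (SpRel s)) V) : Prop :=
  ∃ m : SpTerm s → V, Set.InjOn m (adom T0) ∧ (∀ k, m (Sum.inr k) = ι k) ∧
    smap m T0 ⊆ S

/-- `𝒮` is an isomorphic copy of the canonical structure `T0`. -/
def IsCopy {s : ℕ} {V : Type*} (T0 : Struc (CRel (SpRel s)) (SpTerm s))
    (ι : SpK s → V) (𝒮 : Struc (CRel (SpRel s)) V) : Prop :=
  ∃ m : SpTerm s → V, Set.InjOn m (adom T0) ∧ (∀ k, m (Sum.inr k) = ι k) ∧
    smap m T0 = 𝒮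

/-- Erase the colors of a colored structure. -/
def dalt {s : ℕ} {V : Type*} (S : Struc (CRel (SpRel s)) V) : Struc (SpRel s) V :=
  (fun a => (a.1.1, a.2)) '' S

/-- `𝒮` is a real s-pider in `S`: a minimal substructure whose daltonisation
satisfies `Φ_s`. -/
def RealSpider {s : ℕ} {V : Type*} (S 𝒮 : Struc (CRel (SpRel s)) V)
    (ι : SpK s → V) : Prop :=
  𝒮 ⊆ S ∧ (∃ h, IsHom (Phi s) (dalt 𝒮) ι h) ∧
    ∀ 𝒮' ⊂ 𝒮, ¬ ∃ h, IsHom (Phi s) (dalt 𝒮') ι h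

/-- Abstract ideal s-piders: a color and the two lame indices.  `𝔸_s`. -/
abbrev ISp (s : ℕ) := Bool × Option (Fin s) × Option (Fin s)

/-- The canonical structure of an abstract ideal s-pider. -/
def idealOf (s : ℕ) (p : ISp s) : Struc (CRel (SpRel s)) (SpTerm s) :=
  idealSp s p.1 p.2.1 p.2.2

/-- The zoo: all ideal s-piders isomorphic to some real s-pider in `S`. -/
def zoo {s : ℕ} (S : Struc (CRel (SpRel s)) (SpTerm s)) : Set (ISp s) :=
  {p | ∃ 𝒮, RealSpider S 𝒮 (spι s) ∧ IsCopy (idealOf s p) (spι s) 𝒮}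

/-- Closure of a set of abstract ideal s-piders under the partial functions
`f^I_J` for `(I,J) ∈ F`. -/
def ClosedUnder {s : ℕ} (F : Set (Option (Fin s) × Option (Fin s)))
    (Z : Set (ISp s)) : Prop :=
  ∀ IJ ∈ F, ∀ p ∈ Z, osub p.2.1 IJ.1 → osub p.2.2 IJ.2 →
    (!p.1, odiff IJ.1 p.2.1, odiff IJ.2 p.2.2) ∈ Z

end Spider

/-! Every atom created by a chase step has as its leftmost argument a vertex born in that same
step: in an s-pider query the calf `C_i(x_i, c_i)` is dropped exactly when the knee `x_i` is an
answer variable. So the atoms leaving a vertex are fixed at its birth, and they are a copy of the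
atoms leaving the corresponding variable of the query, where heads and knees visibly have the
claimed out-degrees. A knee that is an answer variable of a step was already a knee before it,
hence the out-degree invariant survives every step and the unions at limit stages. -/

namespace CQD

variable {R K D E : Type*}

def outAtoms (S : Struc R D) (a : D) : Struc R D := {p | (p.1, a :: p.2) ∈ S}

def LeftmostExistential (Φ : Conj R K) (F : Set ℕ) : Prop :=
  ∀ p ∈ Φ, ∃ x ∉ F, ∃ l, p.2 = Sum.inl x :: l

def UniqueBinary (O : Struc R D) : Prop := ∃! p : R × D, (p.1, [p.2]) ∈ O

def UniqueBinaryOf (r : R) (O : Struc R D) : Prop := ∃! b : D, (r, [b]) ∈ O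

lemma uniqueBinary_singleton (r : R) (b : D) : UniqueBinary ({(r, [b])} : Struc R D) :=
  ⟨(r, b), rfl, fun p hp => by simpa [Prod.ext_iff] using hp⟩

lemma mem_adom_of_mem {S : Struc R D} {p : R × List D} {x : D} (hp : p ∈ S) (hx : x ∈ p.2) :
    x ∈ adom S :=
  ⟨p, hp, hx⟩

lemma adom_mono {S S' : Struc R D} (h : S ⊆ S') : adom S ⊆ adom S' :=
  fun _ ⟨p, hp, hx⟩ => ⟨p, h hp, hx⟩

lemma mem_paint {Φ : Conj R K} {d c : Bool} {r : R} {l : List (Term K)} :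
    ((r, c), l) ∈ paint d Φ ↔ c = d ∧ (r, l) ∈ Φ := by
  simp only [paint, Set.mem_image, Prod.ext_iff]
  constructor
  · rintro ⟨p, hp, ⟨rfl, rfl⟩, rfl⟩
    exact ⟨rfl, hp⟩
  · rintro ⟨rfl, hp⟩
    exact ⟨_, hp, ⟨rfl, rfl⟩, rfl⟩

lemma mem_smap_cons_iff {h : D → E} {S : Struc R D} {r : R} {x : E} {l' : List E} :
    (r, x :: l') ∈ smap h S ↔ ∃ v l, (r, v :: l) ∈ S ∧ h v = x ∧ l.map h = l' := by
  simp only [smap, Set.mem_image, Prod.ext_iff]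
  constructor
  · rintro ⟨⟨r, _ | ⟨v, l⟩⟩, hp, rfl, hl⟩
    · simp at hl
    · simp only [List.map_cons, List.cons.injEq] at hl
      exact ⟨v, l, hp, hl⟩
  · rintro ⟨v, l, hp, rfl, rfl⟩
    exact ⟨_, hp, rfl, rfl⟩

lemma UniqueBinary.smap {O : Struc R D} (h : D → E) (hO : UniqueBinary O) :
    UniqueBinary (smap h O) := by
  obtain ⟨⟨r, b⟩, hb, huniq⟩ := hO
  refine ⟨(r, h b), ⟨_, hb, rfl⟩, ?_⟩
  rintro ⟨r', b'⟩ hmem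
  obtain ⟨v, l, hv, rfl, hl⟩ := mem_smap_cons_iff.1 hmem
  obtain rfl : l = [] := List.map_eq_nil_iff.1 hl
  cases huniq (r', v) hv
  rfl

lemma UniqueBinaryOf.smap {r : R} {O : Struc R D} (h : D → E) (hO : UniqueBinaryOf r O) :
    UniqueBinaryOf r (smap h O) := by
  obtain ⟨b, hb, huniq⟩ := hO
  refine ⟨h b, ⟨_, hb, rfl⟩, ?_⟩
  intro b' hmem
  obtain ⟨v, l, hv, rfl, hl⟩ := mem_smap_cons_iff.1 hmem
  obtain rfl : l = [] := List.map_eq_nil_iff.1 hl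
  rw [huniq v hv]

section FreshCopy

variable {Φ : Conj R K} {F : Set ℕ} {S : Struc R D} {ι : K → D} {g : ℕ → D}

lemma outAtoms_union_smap_of_mem_adom (hΦ : LeftmostExistential Φ F)
    (hfresh : ∀ x ∉ F, g x ∉ adom S) {a : D} (ha : a ∈ adom S) :
    outAtoms (S ∪ smap (Sum.elim g ι) Φ) a = outAtoms S a := by
  ext ⟨r, l⟩
  refine or_iff_left_of_imp fun hmem => ?_
  obtain ⟨v, l, hv, rfl, -⟩ := mem_smap_cons_iff.1 hmem
  obtain ⟨x, hx, _, hxl⟩ := hΦ _ hv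
  obtain rfl : v = Sum.inl x := (List.cons.inj hxl).1
  exact absurd ha (hfresh x hx)

lemma outAtoms_union_smap_of_not_mem (hΦ : LeftmostExistential Φ F)
    (hfresh : ∀ x ∉ F, g x ∉ adom S) (hinj : Set.InjOn g {x | x ∉ F}) {v : ℕ} (hv : v ∉ F) :
    outAtoms (S ∪ smap (Sum.elim g ι) Φ) (g v) = smap (Sum.elim g ι) (outAtoms Φ (Sum.inl v)) := by
  ext ⟨r, l'⟩
  have hS : (r, g v :: l') ∉ S := fun h => hfresh v hv (mem_adom_of_mem h (by simp))
  simp only [outAtoms, Set.mem_ofPred_eq, Set.mem_union, hS, false_or, mem_smap_cons_iff]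
  constructor
  · rintro ⟨u, l, hu, hgu, rfl⟩
    obtain ⟨x, hx, _, hxl⟩ := hΦ _ hu
    obtain rfl : u = Sum.inl x := (List.cons.inj hxl).1
    obtain rfl : x = v := hinj hx hv hgu
    exact ⟨(r, l), hu, rfl⟩
  · rintro ⟨⟨r, l⟩, hl, hp⟩
    simp only [Prod.mk.injEq] at hp
    obtain ⟨rfl, rfl⟩ := hp
    exact ⟨_, l, hl, rfl, rfl⟩

end FreshCopy

lemma IsStep.subset {T : TGD R K} {S S' : Struc R D} {ι : K → D} {b : ℕ → D}
    (h : IsStep T S ι b S') : S ⊆ S' := by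
  obtain ⟨g, -, -, -, rfl⟩ := h
  exact Set.subset_union_left

lemma IsStep.outAtoms_eq {T : TGD R K} {S S' : Struc R D} {ι : K → D} {b : ℕ → D}
    (hT : LeftmostExistential T.head T.frontier) (h : IsStep T S ι b S') {a : D}
    (ha : a ∈ adom S) : outAtoms S' a = outAtoms S a := by
  obtain ⟨g, -, hfresh, -, rfl⟩ := h
  exact outAtoms_union_smap_of_mem_adom hT (fun x hx => (hfresh x hx).1) ha

lemma mem_partUnion {X : Type*} {seq : Ordinal.{0} → Set X} {i : Ordinal.{0}} {x : X} :
    x ∈ partUnion seq i ↔ ∃ j < i, x ∈ seq j := by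
  simp [partUnion]

namespace ChaseSeq

variable {𝒯 : Set (TGD R K)} {D0 : Struc R D} {ι : K → D} (C : ChaseSeq 𝒯 D0 ι)

lemma seq_subset_partUnion {i j : Ordinal.{0}} (hji : j < i) : C.seq j ⊆ partUnion C.seq i :=
  fun _ hx => mem_partUnion.2 ⟨j, hji, hx⟩

lemma seq_mono {j k : Ordinal.{0}} (hjk : j ≤ k) (hk : k < C.len) : C.seq j ⊆ C.seq k := by
  rcases hjk.eq_or_lt with rfl | hjk
  · exact subset_rfl
  obtain ⟨p, -, hstep⟩ := C.step k (zero_le.trans_lt hjk) hk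
  exact (C.seq_subset_partUnion hjk).trans hstep.subset

variable {C}

lemma outAtoms_seq_subset (h𝒯 : ∀ T ∈ 𝒯, LeftmostExistential T.head T.frontier)
    {a : D} {j k : Ordinal.{0}} (hjk : j ≤ k) (hk : k < C.len) (ha : a ∈ adom (C.seq j)) :
    outAtoms (C.seq k) a ⊆ outAtoms (C.seq j) a := by
  induction k using WellFoundedLT.induction with
  | _ k ih =>
  rcases hjk.eq_or_lt with rfl | hjk
  · exact subset_rfl
  obtain ⟨p, hp, hstep⟩ := C.step k (zero_le.trans_lt hjk) hk
  rw [hstep.outAtoms_eq (h𝒯 _ hp.1) (adom_mono (C.seq_subset_partUnion hjk) ha)]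
  intro x hx
  obtain ⟨k', hk', hx⟩ := mem_partUnion.1 hx
  rcases le_or_gt j k' with hjk' | hk'j
  · exact ih k' hk' hjk' (hk'.trans hk) hx
  · exact C.seq_mono hk'j.le (hjk.trans hk) hx

lemma outAtoms_partUnion (h𝒯 : ∀ T ∈ 𝒯, LeftmostExistential T.head T.frontier)
    {a : D} {i j : Ordinal.{0}} (hji : j < i) (hi : i ≤ C.len) (ha : a ∈ adom (C.seq j)) :
    outAtoms (partUnion C.seq i) a = outAtoms (C.seq j) a := by
  refine subset_antisymm (fun x hx => ?_) (fun x hx => C.seq_subset_partUnion hji hx)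
  obtain ⟨k, hk, hx⟩ := mem_partUnion.1 hx
  rcases le_or_gt j k with hjk | hkj
  · exact outAtoms_seq_subset h𝒯 hjk (hk.trans_le hi) ha hx
  · exact C.seq_mono hkj.le (hji.trans_le hi) hx

end ChaseSeq

end CQD

namespace Spider

open CQD

variable {s : ℕ} {D E : Type*}

def IsKnee (S : Struc (CRel (SpRel s)) D) (a : D) : Prop :=
  ∃ (c : Bool) (i : Fin s) (x : D),
    ((SpRel.Tlo i, c), [x, a]) ∈ S ∨ ((SpRel.Tup i, c), [x, a]) ∈ S

def HeadProfile (c : Bool) (O : Struc (CRel (SpRel s)) D) : Prop :=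
  (∀ i, UniqueBinaryOf (SpRel.Tlo i, c) O ∧ UniqueBinaryOf (SpRel.Tup i, c) O) ∧
    ∀ r b, (r, [b]) ∈ O → ∃ i, r = (SpRel.Tlo i, c) ∨ r = (SpRel.Tup i, c)

def OutdegInv (S : Struc (CRel (SpRel s)) D) : Prop :=
  (∀ a, IsKnee S a → UniqueBinary (outAtoms S a)) ∧
    ∀ c a l, ((SpRel.H, c), a :: l) ∈ S → HeadProfile c (outAtoms S a)

lemma IsKnee.mem_adom {S : Struc (CRel (SpRel s)) D} {a : D} (h : IsKnee S a) : a ∈ adom S := by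
  obtain ⟨c, i, x, h | h⟩ := h <;> exact mem_adom_of_mem h (by simp)

lemma IsKnee.of_union {S N : Struc (CRel (SpRel s)) D} {a : D} (h : IsKnee (S ∪ N) a) :
    IsKnee S a ∨ IsKnee N a := by
  obtain ⟨c, i, x, (h | h) | (h | h)⟩ := h
  exacts [.inl ⟨c, i, x, .inl h⟩, .inr ⟨c, i, x, .inl h⟩, .inl ⟨c, i, x, .inr h⟩,
    .inr ⟨c, i, x, .inr h⟩]

lemma IsKnee.of_smap {h : D → E} {S : Struc (CRel (SpRel s)) D} {a : E}
    (ha : IsKnee (smap h S) a) : ∃ u, IsKnee S u ∧ h u = a := by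
  obtain ⟨c, i, x, hx | hx⟩ := ha
  · obtain ⟨v, l, hv, -, hl⟩ := mem_smap_cons_iff.1 hx
    obtain ⟨u, rfl, hu⟩ := List.map_eq_singleton_iff.1 hl
    exact ⟨u, ⟨c, i, v, .inl hv⟩, hu⟩
  · obtain ⟨v, l, hv, -, hl⟩ := mem_smap_cons_iff.1 hx
    obtain ⟨u, rfl, hu⟩ := List.map_eq_singleton_iff.1 hl
    exact ⟨u, ⟨c, i, v, .inr hv⟩, hu⟩

lemma HeadProfile.smap {c : Bool} {O : Struc (CRel (SpRel s)) D} (h : D → E)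
    (hO : HeadProfile c O) : HeadProfile c (smap h O) := by
  refine ⟨fun i => ⟨((hO.1 i).1.smap h), ((hO.1 i).2.smap h)⟩, fun r b hb => ?_⟩
  obtain ⟨v, l, hv, -, hl⟩ := mem_smap_cons_iff.1 hb
  obtain rfl : l = [] := List.map_eq_nil_iff.1 hl
  exact hO.2 r v hv

section Query

variable {I J : Option (Fin s)} {d : Bool}

lemma mem_Phi {a : SpRel s × List (SpTerm s)} :
    a ∈ Phi s ↔ a = (SpRel.H, [vz s, vtail s, vant s]) ∨
      ∃ i : Fin s, a = (SpRel.Tlo i, [vz s, vx s i]) ∨ a = (SpRel.Tup i, [vz s, vy s i]) ∨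
        a = (SpRel.Clo i, [vx s i, clo s i]) ∨ a = (SpRel.Cup i, [vy s i, cup s i]) := by
  simp [Phi, Set.mem_iUnion]

lemma mem_spq_body {a : SpRel s × List (SpTerm s)} :
    a ∈ (spq s I J).body ↔ a = (SpRel.H, [vz s, vtail s, vant s]) ∨
      ∃ i : Fin s, a = (SpRel.Tlo i, [vz s, vx s i]) ∨ a = (SpRel.Tup i, [vz s, vy s i]) ∨
        (J ≠ some i ∧ a = (SpRel.Clo i, [vx s i, clo s i])) ∨
        (I ≠ some i ∧ a = (SpRel.Cup i, [vy s i, cup s i])) := by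
  simp only [spq, Set.mem_sdiff, mem_Phi]
  aesop

lemma mem_spq_free {n : ℕ} :
    n ∈ (spq s I J).free ↔ (∃ i, I = some i ∧ n = 2 * i + 4) ∨ ∃ j, J = some j ∧ n = 2 * j + 3 := by
  simp [spq, Option.mem_def]

lemma leftmostExistential_spq :
    LeftmostExistential (paint d (spq s I J).body) (spq s I J).free := by
  rintro ⟨⟨r, c⟩, l⟩ hp
  rcases mem_spq_body.1 (mem_paint.1 hp).2 with h | ⟨i, h | h | ⟨hJ, h⟩ | ⟨hI, h⟩⟩ <;>
    obtain ⟨rfl, rfl⟩ := Prod.mk.inj h <;> refine ⟨_, ?_, _, rfl⟩ <;>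
    simp only [mem_spq_free] <;> grind [Fin.ext]

lemma mem_outAtoms_spq_vz {p : CRel (SpRel s) × List (SpTerm s)} :
    p ∈ outAtoms (paint d (spq s I J).body) (vz s) ↔ p = ((SpRel.H, d), [vtail s, vant s]) ∨
      ∃ i, p = ((SpRel.Tlo i, d), [vx s i]) ∨ p = ((SpRel.Tup i, d), [vy s i]) := by
  obtain ⟨⟨r, c⟩, l⟩ := p
  simp only [outAtoms, Set.mem_ofPred_eq, mem_paint, mem_spq_body, vz, vx, vy, vtail, vant, clo,
    cup, Prod.mk.injEq, List.cons.injEq, Sum.inl.injEq]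
  grind

lemma outAtoms_spq_vx {i : Fin s} (hJ : J ≠ some i) :
    outAtoms (paint d (spq s I J).body) (vx s i) = {((SpRel.Clo i, d), [clo s i])} := by
  ext ⟨⟨r, c⟩, l⟩
  simp only [outAtoms, Set.mem_ofPred_eq, mem_paint, mem_spq_body, vz, vx, vy, vtail, vant, clo,
    cup, Prod.mk.injEq, List.cons.injEq, Sum.inl.injEq, Set.mem_singleton_iff]
  grind [Fin.ext]

lemma outAtoms_spq_vy {i : Fin s} (hI : I ≠ some i) :
    outAtoms (paint d (spq s I J).body) (vy s i) = {((SpRel.Cup i, d), [cup s i])} := by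
  ext ⟨⟨r, c⟩, l⟩
  simp only [outAtoms, Set.mem_ofPred_eq, mem_paint, mem_spq_body, vz, vx, vy, vtail, vant, clo,
    cup, Prod.mk.injEq, List.cons.injEq, Sum.inl.injEq, Set.mem_singleton_iff]
  grind [Fin.ext]

lemma headProfile_paint_spq {c : Bool} {u : SpTerm s} {l : List (SpTerm s)}
    (h : ((SpRel.H, c), u :: l) ∈ paint d (spq s I J).body) :
    HeadProfile c (outAtoms (paint d (spq s I J).body) u) := by
  obtain ⟨rfl, hmem⟩ := mem_paint.1 h
  obtain rfl : u = vz s := by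
    rcases mem_spq_body.1 hmem with h | ⟨i, h | h | ⟨-, h⟩ | ⟨-, h⟩⟩ <;> simp_all
  refine ⟨fun i => ⟨⟨vx s i, mem_outAtoms_spq_vz.2 (.inr ⟨i, .inl rfl⟩), fun b hb => ?_⟩,
    ⟨vy s i, mem_outAtoms_spq_vz.2 (.inr ⟨i, .inr rfl⟩), fun b hb => ?_⟩⟩, fun r b hb => ?_⟩ <;>
    rcases mem_outAtoms_spq_vz.1 hb with h | ⟨k, h | h⟩ <;> simp_all

lemma isKnee_paint_spq {u : SpTerm s} (hu : IsKnee (paint d (spq s I J).body) u) :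
    ∃ n, u = Sum.inl n ∧
      (n ∉ (spq s I J).free → UniqueBinary (outAtoms (paint d (spq s I J).body) u)) := by
  obtain ⟨c, i, x, h | h⟩ := hu <;>
    rcases mem_spq_body.1 (mem_paint.1 h).2 with h | ⟨k, h | h | ⟨-, h⟩ | ⟨-, h⟩⟩ <;>
    simp only [Prod.mk.injEq, reduceCtorEq, SpRel.Tlo.injEq, SpRel.Tup.injEq, List.cons.injEq,
      and_false, false_and] at h
  · obtain ⟨rfl, -, rfl, -⟩ := h
    refine ⟨_, rfl, fun hn => ?_⟩
    rw [outAtoms_spq_vx fun hJ => hn (mem_spq_free.2 (.inr ⟨i, hJ, rfl⟩))]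
    exact uniqueBinary_singleton _ _
  · obtain ⟨rfl, -, rfl, -⟩ := h
    refine ⟨_, rfl, fun hn => ?_⟩
    rw [outAtoms_spq_vy fun hI => hn (mem_spq_free.2 (.inl ⟨i, hI, rfl⟩))]
    exact uniqueBinary_singleton _ _

lemma isKnee_of_holdsAt {c : Bool} {S : Struc (CRel (SpRel s)) D} {ι : SpK s → D} {b : ℕ → D}
    (h : holdsAt (paint c (spq s I J).body) (spq s I J).free S ι b) {n : ℕ}
    (hn : n ∈ (spq s I J).free) : IsKnee S (b n) := by
  obtain ⟨g, hg, hgb⟩ := h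
  rw [← hgb n hn]
  rcases mem_spq_free.1 hn with ⟨i, -, rfl⟩ | ⟨i, -, rfl⟩
  · exact ⟨c, i, g 0, .inr (hg _ (mem_paint.2 ⟨rfl, mem_spq_body.2 (.inr ⟨i, .inr (.inl rfl)⟩)⟩))⟩
  · exact ⟨c, i, g 0, .inl (hg _ (mem_paint.2 ⟨rfl, mem_spq_body.2 (.inr ⟨i, .inl rfl⟩)⟩))⟩

end Query

lemma OutdegInv.of_isStep {S S' : Struc (CRel (SpRel s)) D} {ι : SpK s → D} {b : ℕ → D}
    {c : Bool} {I J : Option (Fin s)} (hS : OutdegInv S)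
    (hstep : IsStep (tgdGR c (spq s I J)) S ι b S')
    (hb : ∀ n ∈ (spq s I J).free, IsKnee S (b n)) : OutdegInv S' := by
  obtain ⟨g, hgb, hfresh, hinj, rfl⟩ := hstep
  set Φ := paint (!c) (spq s I J).body
  change OutdegInv (S ∪ smap (Sum.elim g ι) Φ)
  have hΦ : LeftmostExistential Φ (spq s I J).free := leftmostExistential_spq
  have hfresh' : ∀ x ∉ (spq s I J).free, g x ∉ adom S := fun x hx => (hfresh x hx).1
  have hold : ∀ a ∈ adom S, outAtoms (S ∪ smap (Sum.elim g ι) Φ) a = outAtoms S a :=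
    fun a ha => outAtoms_union_smap_of_mem_adom hΦ hfresh' ha
  have hnew : ∀ v ∉ (spq s I J).free, outAtoms (S ∪ smap (Sum.elim g ι) Φ) (g v) =
      smap (Sum.elim g ι) (outAtoms Φ (Sum.inl v)) :=
    fun v hv => outAtoms_union_smap_of_not_mem hΦ hfresh' hinj hv
  have hknee : ∀ a, IsKnee S a → UniqueBinary (outAtoms (S ∪ smap (Sum.elim g ι) Φ) a) :=
    fun a ha => (hold a ha.mem_adom).symm ▸ hS.1 a ha
  refine ⟨fun a ha => ?_, fun c' a l h => ?_⟩
  · rcases ha.of_union with ha | ha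
    · exact hknee a ha
    obtain ⟨u, hu, rfl⟩ := ha.of_smap
    obtain ⟨n, rfl, hn⟩ := isKnee_paint_spq hu
    by_cases hfree : n ∈ (spq s I J).free
    · simpa [hgb n hfree] using hknee _ (hb n hfree)
    · rw [Sum.elim_inl, hnew n hfree]
      exact (hn hfree).smap _
  · rcases h with h | h
    · rw [hold a (mem_adom_of_mem h (by simp))]
      exact hS.2 c' a l h
    obtain ⟨u, l, hu, rfl, -⟩ := mem_smap_cons_iff.1 h
    obtain ⟨x, hx, _, hxl⟩ := hΦ _ hu
    obtain rfl : u = Sum.inl x := (List.cons.inj hxl).1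
    rw [Sum.elim_inl, hnew x hx]
    exact (headProfile_paint_spq hu).smap _

lemma outdegInv_empty : OutdegInv (∅ : Struc (CRel (SpRel s)) D) :=
  ⟨fun _ ⟨_, _, _, h⟩ => by simp at h, fun _ _ _ h => absurd h (Set.notMem_empty _)⟩

lemma isStep_idealSp :
    IsStep (tgdGR false (spq s none none)) ∅ (spι s) Sum.inl (idealSp s true none none) := by
  refine ⟨Sum.inl, fun _ _ => rfl, fun x _ => ⟨by simp [adom], by simp [spι]⟩,
    Sum.inl_injective.injOn, ?_⟩
  have hid : Sum.elim Sum.inl (spι s) = id := Sum.elim_inl_inr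
  ext ⟨⟨r, c⟩, l⟩
  simp only [tgdGR, Bool.not_false, Set.empty_union, hid, smap, List.map_id, Prod.mk.eta,
    Set.image_id', mem_paint, mem_spq_body]
  simp only [idealSp, Set.mem_union, Set.mem_singleton_iff, Set.mem_iUnion, Set.mem_insert_iff,
    Prod.mk.injEq]
  grind

lemma outdegInv_idealSp : OutdegInv (idealSp s true none none) :=
  outdegInv_empty.of_isStep isStep_idealSp (fun n hn => by simp [mem_spq_free] at hn)

lemma leftmostExistential_TQ {𝒬 : Set (CQ (SpRel s) (SpK s))} (h𝒬 : 𝒬 ⊆ SpiderQs s) :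
    ∀ T ∈ TQ 𝒬, LeftmostExistential T.head T.frontier := by
  rintro _ ⟨Q, hQ, c, rfl⟩
  obtain ⟨I, J, -, rfl⟩ := h𝒬 hQ
  exact leftmostExistential_spq

variable {𝒬 : Set (CQ (SpRel s) (SpK s))} {D0 : Struc (CRel (SpRel s)) D} {ι : SpK s → D}

lemma OutdegInv.partUnion {𝒯 : Set (TGD (CRel (SpRel s)) (SpK s))}
    (h𝒯 : ∀ T ∈ 𝒯, LeftmostExistential T.head T.frontier) {C : ChaseSeq 𝒯 D0 ι}
    {i : Ordinal.{0}} (hi : i ≤ C.len) (h : ∀ j < i, OutdegInv (C.seq j)) :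
    OutdegInv (partUnion C.seq i) := by
  have hfrozen := fun {a j} (hj : j < i) (ha : a ∈ adom (C.seq j)) =>
    C.outAtoms_partUnion h𝒯 hj hi ha
  refine ⟨fun a ⟨c, k, x, ha⟩ => ?_, fun c a l ha => ?_⟩
  · obtain ⟨j, hj, ha⟩ : ∃ j < i, IsKnee (C.seq j) a := by
      rcases ha with ha | ha <;> obtain ⟨j, hj, ha⟩ := mem_partUnion.1 ha
      exacts [⟨j, hj, c, k, x, .inl ha⟩, ⟨j, hj, c, k, x, .inr ha⟩]
    rw [hfrozen hj ha.mem_adom]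
    exact (h j hj).1 a ha
  · obtain ⟨j, hj, ha⟩ := mem_partUnion.1 ha
    rw [hfrozen hj (mem_adom_of_mem ha (by simp))]
    exact (h j hj).2 c a l ha

lemma outdegInv_seq (h𝒬 : 𝒬 ⊆ SpiderQs s) (h0 : OutdegInv D0) (C : ChaseSeq (TQ 𝒬) D0 ι)
    {i : Ordinal.{0}} (hi : i < C.len) : OutdegInv (C.seq i) := by
  induction i using WellFoundedLT.induction with
  | _ i ih =>
  rcases eq_or_ne i 0 with rfl | hi0
  · rw [C.init]
    exact h0
  obtain ⟨⟨b, T⟩, ⟨⟨Q, hQ, c, rfl⟩, hbody, -⟩, hstep⟩ := C.step i (pos_iff_ne_zero.2 hi0) hi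
  obtain ⟨I, J, -, rfl⟩ := h𝒬 hQ
  have hprev : OutdegInv (partUnion C.seq i) :=
    OutdegInv.partUnion (leftmostExistential_TQ h𝒬) hi.le fun j hj => ih j hj (hj.trans hi)
  exact hprev.of_isStep hstep fun n hn => isKnee_of_holdsAt hbody hn

end Spider

open CQD Spider in
theorem chase_outdegrees (s : ℕ) (𝒬 : Set (CQD.CQ (SpRel s) (SpK s)))
    (h𝒬 : 𝒬 ⊆ SpiderQs s) (S : Struc (CRel (SpRel s)) (SpTerm s))
    (hS : SpChase s 𝒬 S) :
    (∀ a : SpTerm s,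
      (∃ (c : Bool) (i : Fin s) (x : SpTerm s),
          ((SpRel.Tlo i, c), [x, a]) ∈ S ∨ ((SpRel.Tup i, c), [x, a]) ∈ S) →
      ∃! p : CRel (SpRel s) × SpTerm s, (p.1, [a, p.2]) ∈ S) ∧
    (∀ (c : Bool) (a : SpTerm s),
      (∃ t u : SpTerm s, ((SpRel.H, c), [a, t, u]) ∈ S) →
      (∀ i : Fin s,
          (∃! b : SpTerm s, ((SpRel.Tlo i, c), [a, b]) ∈ S) ∧
          (∃! b : SpTerm s, ((SpRel.Tup i, c), [a, b]) ∈ S)) ∧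
      (∀ (r : CRel (SpRel s)) (b : SpTerm s), (r, [a, b]) ∈ S →
          ∃ i : Fin s, r = (SpRel.Tlo i, c) ∨ r = (SpRel.Tup i, c))) := by
  obtain ⟨C, rfl⟩ := hS
  have hinv : OutdegInv C.result := OutdegInv.partUnion (leftmostExistential_TQ h𝒬) le_rfl
    fun j hj => outdegInv_seq h𝒬 outdegInv_idealSp C hj
  exact ⟨hinv.1, fun c a ⟨t, u, h⟩ => hinv.2 c a [t, u] h⟩
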